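/- arXiv:2208.00546 — 2 statements merged into one kernel-verified Lean document; each statement's English description precedes it below -/
import Mathlib

section
/- Let g(z) = e^{iθ} z^m with m ≥ 2 and fix p̂ = r e^{iθ₀} with 0 < r < 1. Then there exists a constant C₀ > 0 (depending only on r and m) such that for every z₀ in the open unit disk there exist k ≥ 0 and q in the open unit disk with g^k(q) = p̂ and ρ_Δ(z₀, q) ≤ C₀, where ρ_Δ denotes the Poincaré (hyperbolic) distance on the unit disk. -/
/-!
Let `s = ‖z₀‖`, take `k` least with `s ^ m ^ k ≤ r` and put `M = m ^ k`. Then `s ^ M ≤ r`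
(Bernoulli) and the minimality of `k` (`r < s ^ (M / m)`) make `1 - s` of order `1 / M`, and so
is `1 - t` for `t = r ^ (1 / M)`. The points `q = t e^{iγ}` with `g^[k] q = phat` have arguments
spaced `2π / M` apart, so one of them satisfies `|arg z₀ - γ| ≤ π / M`. Then `1 - ‖z₀‖`,
`1 - ‖q‖` and `‖1 - z₀ q̄‖` are all comparable to `1 / M`, and the identity
`1 - δ² = (1 - ‖z‖²)(1 - ‖w‖²) / ‖1 - z w̄‖²` for the pseudo-hyperbolic distance `δ` bounds the
Poincaré distance independently of `M`.
-/

open Complex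

noncomputable def poincareDist (z w : ℂ) : ℝ :=
  Real.log ((1 + ‖(z - w) / (1 - z * (starRingEnd ℂ) w)‖) /
    (1 - ‖(z - w) / (1 - z * (starRingEnd ℂ) w)‖))

open ComplexConjugate
open scoped Real

theorem one_sub_le_mul_one_sub_of_pow_le {s r : ℝ} (hs : 0 ≤ s) {n : ℕ} (h : s ^ n ≤ r) :
    1 - r ≤ n * (1 - s) := by
  have := one_add_mul_le_pow (a := s - 1) (by linarith) n
  rw [add_sub_cancel] at this
  linarith

theorem mul_one_sub_le_neg_log_of_le_pow {s r : ℝ} (hs : 0 ≤ s) (hr : 0 < r) {n : ℕ}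
    (h : r ≤ s ^ n) : n * (1 - s) ≤ -Real.log r := by
  have hexp : s ^ n ≤ Real.exp (n * (s - 1)) := by
    rw [Real.exp_nat_mul]
    exact pow_le_pow_left₀ hs (by linarith [Real.add_one_le_exp (s - 1)]) n
  have := (Real.log_le_iff_le_exp hr).2 (h.trans hexp)
  linarith

theorem exists_pow_pow_le_and_mul_one_sub_le {s r : ℝ} (hs0 : 0 ≤ s) (hs1 : s < 1)
    (hr0 : 0 < r) (hr1 : r ≤ 1) {m : ℕ} (hm : 2 ≤ m) :
    ∃ k : ℕ, s ^ m ^ k ≤ r ∧ ((m ^ k : ℕ) : ℝ) * (1 - s) ≤ 1 + m * -Real.log r := by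
  have hex : ∃ k : ℕ, s ^ m ^ k ≤ r := by
    obtain ⟨n, hn⟩ := exists_pow_lt_of_lt_one hr0 hs1
    exact ⟨n, (pow_le_pow_of_le_one hs0 hs1.le (Nat.lt_pow_self hm).le).trans hn.le⟩
  have hL : 0 ≤ -Real.log r := neg_nonneg.2 (Real.log_nonpos hr0.le hr1)
  refine ⟨Nat.find hex, Nat.find_spec hex, ?_⟩
  rcases hk : Nat.find hex with _ | k
  · push_cast
    nlinarith
  · have hmin : r < s ^ m ^ k := not_le.1 (Nat.find_min hex (hk ▸ k.lt_succ_self))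
    have := mul_one_sub_le_neg_log_of_le_pow hs0 hr0 hmin.le
    rw [pow_succ, Nat.cast_mul, mul_comm _ (m : ℝ), mul_assoc]
    nlinarith

theorem exists_iterate_eq_exp_mul_pow {g : ℂ → ℂ} {m : ℕ} {θ : ℝ}
    (hg : ∀ z, g z = exp (θ * I) * z ^ m) (k : ℕ) :
    ∃ c : ℝ, ∀ z, g^[k] z = exp (c * I) * z ^ m ^ k := by
  induction k with
  | zero => exact ⟨0, by simp⟩
  | succ k ih =>
    obtain ⟨c, hc⟩ := ih
    refine ⟨θ + m * c, fun z => ?_⟩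
    rw [Function.iterate_succ_apply', hc, hg, mul_pow, ← exp_nat_mul, ← pow_mul, ← pow_succ,
      ← mul_assoc, ← exp_add]
    push_cast
    ring_nf

theorem exists_exp_pow_eq_and_mul_abs_sub_le {M : ℕ} (hM : 0 < M) (α ψ : ℝ) :
    ∃ γ : ℝ, exp (γ * I) ^ M = exp (ψ * I) ∧ M * |α - γ| ≤ π := by
  set x := (M * α - ψ) / (2 * π)
  refine ⟨(ψ + 2 * π * round x) / M, ?_, ?_⟩
  · rw [← exp_nat_mul, ← mul_one (exp (ψ * I)), ← exp_int_mul_two_pi_mul_I (round x), ← exp_add]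
    have hM' : (M : ℂ) ≠ 0 := by exact_mod_cast hM.ne'
    congr 1
    push_cast
    field_simp
  · calc M * |α - (ψ + 2 * π * round x) / M| = |M * (α - (ψ + 2 * π * round x) / M)| := by
          rw [abs_mul, Nat.abs_cast]
      _ = 2 * π * |x - round x| := by
          rw [← abs_of_pos Real.two_pi_pos, ← abs_mul, abs_of_pos Real.two_pi_pos]
          congr 1
          simp only [x]
          field_simp
          ring
      _ ≤ π := by nlinarith [Real.pi_pos, abs_sub_round x]

theorem norm_one_sub_polar_mul_conj_polar_le {s t : ℝ} (hs0 : 0 ≤ s) (hs1 : s ≤ 1)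
    (ht0 : 0 ≤ t) (ht1 : t ≤ 1) (α γ : ℝ) :
    ‖1 - s * exp (α * I) * conj (t * exp (γ * I))‖ ≤ (1 - s) + (1 - t) + |α - γ| := by
  have hpolar : s * exp (α * I) * conj (t * exp (γ * I))
      = (s * t : ℝ) * exp (I * (α - γ : ℝ)) := by
    rw [map_mul, conj_ofReal, ← exp_conj, map_mul, conj_ofReal, conj_I,
      show I * ((α - γ : ℝ) : ℂ) = α * I + γ * -I by push_cast; ring, exp_add]
    push_cast
    ring
  have hst : 0 ≤ s * t := mul_nonneg hs0 ht0
  calc ‖1 - s * exp (α * I) * conj (t * exp (γ * I))‖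
      = ‖((1 - s * t : ℝ) : ℂ) - (s * t : ℝ) * (exp (I * (α - γ : ℝ)) - 1)‖ := by
        rw [hpolar]; push_cast; ring_nf
    _ ≤ (1 - s * t) + s * t * |α - γ| := by
        refine (norm_sub_le _ _).trans ?_
        rw [norm_mul, norm_real, norm_real, Real.norm_of_nonneg hst,
          Real.norm_of_nonneg (by nlinarith)]
        gcongr
        exact Real.norm_exp_I_mul_ofReal_sub_one_le
    _ ≤ (1 - s) + (1 - t) + |α - γ| := by
        nlinarith [abs_nonneg (α - γ), mul_nonneg (sub_nonneg.2 hs1) (sub_nonneg.2 ht1),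
          mul_le_one₀ hs1 ht0 ht1]

theorem normSq_one_sub_mul_conj_sub_normSq_sub (z w : ℂ) :
    normSq (1 - z * conj w) - normSq (z - w) = (1 - normSq z) * (1 - normSq w) := by
  simp only [normSq_apply, sub_re, sub_im, mul_re, mul_im, one_re, one_im, conj_re, conj_im]
  ring

theorem one_sub_mul_conj_ne_zero {z w : ℂ} (hz : ‖z‖ < 1) (hw : ‖w‖ < 1) :
    1 - z * conj w ≠ 0 := by
  refine sub_ne_zero.2 fun h => ?_
  have : ‖z‖ * ‖w‖ = 1 := by rw [← norm_conj w, ← norm_mul, ← h, norm_one]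
  nlinarith [norm_nonneg z, norm_nonneg w]

theorem poincareDist_le_log {z w : ℂ} (hz : ‖z‖ < 1) (hw : ‖w‖ < 1) :
    poincareDist z w ≤ Real.log (4 * ‖1 - z * conj w‖ ^ 2 / ((1 - ‖z‖) * (1 - ‖w‖))) := by
  have hu : 0 < ‖1 - z * conj w‖ := norm_pos_iff.2 (one_sub_mul_conj_ne_zero hz hw)
  have hz0 := norm_nonneg z
  have hw0 := norm_nonneg w
  set P := (1 - ‖z‖ ^ 2) * (1 - ‖w‖ ^ 2)
  have hP : (1 - ‖z‖) * (1 - ‖w‖) ≤ P :=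
    mul_le_mul (by nlinarith) (by nlinarith) (by linarith) (by nlinarith)
  have hP0 : 0 < (1 - ‖z‖) * (1 - ‖w‖) := mul_pos (by linarith) (by linarith)
  set δ := ‖(z - w) / (1 - z * conj w)‖
  have hδ : 1 - δ ^ 2 = P / ‖1 - z * conj w‖ ^ 2 := by
    have h := normSq_one_sub_mul_conj_sub_normSq_sub z w
    simp only [normSq_eq_norm_sq] at h
    rw [show δ = ‖z - w‖ / ‖1 - z * conj w‖ from norm_div _ _, div_pow]
    field_simp
    linarith
  have hδ2 : 0 < 1 - δ ^ 2 := by rw [hδ]; exact div_pos (hP0.trans_le hP) (by positivity)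
  have hδ0 : 0 ≤ δ := norm_nonneg _
  have hδ1 : δ < 1 := by nlinarith
  unfold poincareDist
  refine Real.log_le_log (div_pos (by linarith) (by linarith)) ?_
  calc (1 + δ) / (1 - δ) = (1 + δ) ^ 2 / (1 - δ ^ 2) := by
        rw [div_eq_div_iff (by linarith) hδ2.ne']; ring
    _ ≤ 4 / (1 - δ ^ 2) := by gcongr; nlinarith
    _ = 4 * ‖1 - z * conj w‖ ^ 2 / P := by rw [hδ]; field_simp
    _ ≤ 4 * ‖1 - z * conj w‖ ^ 2 / ((1 - ‖z‖) * (1 - ‖w‖)) := by gcongr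

/-- If `1 - ‖z‖`, `1 - ‖w‖` and `‖1 - z w̄‖` are all of order `1 / N`, the distance is bounded
independently of `N`. -/
theorem poincareDist_le_of_mul_le {z w : ℂ} (hz : ‖z‖ < 1) (hw : ‖w‖ < 1) {N a b : ℝ}
    (ha : 0 < a) (hza : a ≤ N * (1 - ‖z‖)) (hwa : a ≤ N * (1 - ‖w‖))
    (hb : N * ‖1 - z * conj w‖ ≤ b) :
    poincareDist z w ≤ Real.log (4 * (b / a) ^ 2) := by
  have hu : 0 < ‖1 - z * conj w‖ := norm_pos_iff.2 (one_sub_mul_conj_ne_zero hz hw)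
  have hz1 : 0 < 1 - ‖z‖ := by linarith
  have hw1 : 0 < 1 - ‖w‖ := by linarith
  have hN : 0 < N := pos_of_mul_pos_left (ha.trans_le hza) hz1.le
  refine (poincareDist_le_log hz hw).trans (Real.log_le_log (by positivity) ?_)
  calc 4 * ‖1 - z * conj w‖ ^ 2 / ((1 - ‖z‖) * (1 - ‖w‖))
      = 4 * (N * ‖1 - z * conj w‖) ^ 2 / ((N * (1 - ‖z‖)) * (N * (1 - ‖w‖))) := by
        field_simp
    _ ≤ 4 * b ^ 2 / (a * a) := by gcongr
    _ = 4 * (b / a) ^ 2 := by ring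

/-- for g(z) = e^{iθ}z^m, m ≥ 2, and phat = r e^{iθ₀} with
0 < r < 1, there is C₀ > 0 such that every point of the unit disk is within
Poincaré distance C₀ of some iterated preimage of phat. -/
theorem power_map_preimages_shadowing
    (m : ℕ) (hm : 2 ≤ m) (θ θ₀ r : ℝ) (hr0 : 0 < r) (hr1 : r < 1)
    (g : ℂ → ℂ) (hg : ∀ z, g z = Complex.exp (θ * Complex.I) * z ^ m)
    (phat : ℂ) (hp : phat = (r : ℂ) * Complex.exp (θ₀ * Complex.I)) :
    ∃ C₀ > 0, ∀ z₀ : ℂ, ‖z₀‖ < 1 →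
      ∃ (k : ℕ) (q : ℂ), ‖q‖ < 1 ∧ g^[k] q = phat ∧
        poincareDist z₀ q ≤ C₀ := by
  set L := -Real.log r
  have hL : 0 ≤ L := neg_nonneg.2 (Real.log_nonpos hr0.le hr1.le)
  have hC : 1 ≤ (1 + m * L + L + π) / (1 - r) :=
    (one_le_div (by linarith)).2 (by nlinarith [Real.pi_pos, m.cast_nonneg (α := ℝ)])
  refine ⟨Real.log (4 * ((1 + m * L + L + π) / (1 - r)) ^ 2), Real.log_pos (by nlinarith),
    fun z₀ hz₀ => ?_⟩
  obtain ⟨k, hks, hkM⟩ := exists_pow_pow_le_and_mul_one_sub_le (norm_nonneg z₀) hz₀ hr0 hr1.le hm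
  set M := m ^ k
  have hM : 0 < M := by positivity
  obtain ⟨c, hc⟩ := exists_iterate_eq_exp_mul_pow hg k
  obtain ⟨γ, hγ, hαγ⟩ := exists_exp_pow_eq_and_mul_abs_sub_le hM (arg z₀) (θ₀ - c)
  set t := r ^ (M⁻¹ : ℝ)
  have htM : t ^ M = r := Real.rpow_inv_natCast_pow hr0.le hM.ne'
  have ht0 : 0 ≤ t := by positivity
  have ht1 : t < 1 := Real.rpow_lt_one hr0.le hr1 (by positivity)
  set q : ℂ := t * exp (γ * I)
  have hq : ‖q‖ = t := by simp [q, ht0]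
  refine ⟨k, q, hq ▸ ht1, ?_, ?_⟩
  · rw [hc, hp, mul_pow, ← ofReal_pow, htM, hγ, mul_left_comm, ← exp_add]
    push_cast
    ring_nf
  · have hu := norm_one_sub_polar_mul_conj_polar_le (norm_nonneg z₀) hz₀.le ht0 ht1.le (arg z₀) γ
    rw [norm_mul_exp_arg_mul_I] at hu
    refine poincareDist_le_of_mul_le hz₀ (hq ▸ ht1) (N := M) (sub_pos.2 hr1)
      (one_sub_le_mul_one_sub_of_pow_le (norm_nonneg z₀) hks)
      (hq ▸ one_sub_le_mul_one_sub_of_pow_le ht0 htM.le) ?_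
    have htL := mul_one_sub_le_neg_log_of_le_pow ht0 hr0 htM.ge
    calc M * ‖1 - z₀ * conj q‖
        ≤ M * (1 - ‖z₀‖) + M * (1 - t) + M * |arg z₀ - γ| := by
          nlinarith [(M.cast_pos (α := ℝ)).2 hM]
      _ ≤ 1 + m * L + L + π := by linarith
end

section
/- Suppose f is a polynomial of degree N ≥ 2 with an attracting fixed point p, and the basin of attraction A(p) = {z : f^n(z) → p} is not connected. Then A(p) has infinitely many connected components. -/
/-! Since a nonconstant polynomial is surjective, a point `z₀` of the basin outside the immediate
basin `Ω` has a backward orbit `z₀ ← z₁ ← z₂ ← ⋯`, which stays in the basin. The components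
`Ωₙ ∋ zₙ` satisfy `f^[k] '' Ω_{n+k} ⊆ Ωₙ`, and none of them is `Ω`, as `Ω` is forward invariant.
If `Ω_j = Ω_k` with `j < k`, this component would be invariant under `f^[k-j]`. But `|f'(p)| < 1`
makes the basin, hence `Ω`, a neighbourhood of `p`, so every orbit in the basin eventually enters
`Ω`, and the invariant component would meet `Ω`. -/

open Filter Function Set Topology NNReal

section Components

variable {X : Type*} [TopologicalSpace X] {F : X → X} {A : Set X}

theorem mapsTo_iterate_connectedComponentIn (hF : Continuous F) (hA : MapsTo F A A) {x : X}
    (hx : x ∈ A) (n : ℕ) :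
    MapsTo F^[n] (connectedComponentIn A x) (connectedComponentIn A (F^[n] x)) :=
  ((hF.iterate n).continuousOn.mapsTo_connectedComponentIn hx).mono_right
    (connectedComponentIn_mono _ (hA.iterate n).image_subset)

theorem mapsTo_iterate_connectedComponentIn_of_fixed (hF : Continuous F) (hA : MapsTo F A A)
    {p : X} (hp : F p = p) (hpA : p ∈ A) (n : ℕ) :
    MapsTo F^[n] (connectedComponentIn A p) (connectedComponentIn A p) := by
  simpa only [iterate_fixed hp] using mapsTo_iterate_connectedComponentIn hF hA hpA n

/-- A component that `F^[d]` maps into itself contains whole orbits of `F^[d]`, which eventually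
enter the forward-invariant component of `p`. -/
theorem connectedComponentIn_eq_of_iterate_mem (hF : Continuous F) (hA : MapsTo F A A) {p : X}
    (hp : F p = p) (hpA : p ∈ A) (hattract : ∀ z ∈ A, ∃ n, F^[n] z ∈ connectedComponentIn A p)
    {x : X} (hx : x ∈ A) {d : ℕ} (hd : 0 < d) (hper : F^[d] x ∈ connectedComponentIn A x) :
    connectedComponentIn A x = connectedComponentIn A p := by
  have hself : MapsTo F^[d] (connectedComponentIn A x) (connectedComponentIn A x) := by
    simpa only [← connectedComponentIn_eq hper] using mapsTo_iterate_connectedComponentIn hF hA hx d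
  obtain ⟨n, hn⟩ := hattract x hx
  have hmem_x : F^[d * n] x ∈ connectedComponentIn A x := by
    rw [iterate_mul]
    exact hself.iterate n (mem_connectedComponentIn hx)
  have hmem_p : F^[d * n] x ∈ connectedComponentIn A p := by
    rw [← Nat.sub_add_cancel (Nat.le_mul_of_pos_left n hd), iterate_add_apply]
    exact mapsTo_iterate_connectedComponentIn_of_fixed hF hA hp hpA _ hn
  rw [connectedComponentIn_eq hmem_x, connectedComponentIn_eq hmem_p]

theorem exists_connectedComponentIn_ne_of_not_isPreconnected {p : X} (hpA : p ∈ A)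
    (hA : ¬ IsPreconnected A) :
    ∃ z ∈ A, connectedComponentIn A z ≠ connectedComponentIn A p := by
  by_contra! h
  refine hA (isPreconnected_of_forall p fun y hy => ?_)
  refine ⟨connectedComponentIn A y, connectedComponentIn_subset A y, ?_,
    mem_connectedComponentIn hy, isPreconnected_connectedComponentIn⟩
  exact h y hy ▸ mem_connectedComponentIn hpA

theorem infinite_connectedComponentIn_of_surjective (hF : Continuous F) (hsurj : Surjective F)
    (hA : F ⁻¹' A = A) {p : X} (hp : F p = p) (hpA : p ∈ A)
    (hattract : ∀ z ∈ A, ∃ n, F^[n] z ∈ connectedComponentIn A p) (hdisconn : ¬ IsPreconnected A) :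
    {C : Set X | ∃ z ∈ A, C = connectedComponentIn A z}.Infinite := by
  have hmaps : MapsTo F A A := hA.ge
  obtain ⟨z₀, hz₀A, hz₀⟩ := exists_connectedComponentIn_ne_of_not_isPreconnected hpA hdisconn
  set z : ℕ → X := fun n => (surjInv hsurj)^[n] z₀
  have hz : ∀ n k, F^[k] (z (n + k)) = z n := fun n k => by
    simp only [z, add_comm n k, iterate_add_apply, (rightInverse_surjInv hsurj).iterate k _]
  have hz_zero : ∀ n, F^[n] (z n) = z₀ := fun n => by simpa [z] using hz 0 n
  have hzA : ∀ n, z n ∈ A := fun n => by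
    have hpre : F^[n] ⁻¹' A = A := preimage_iterate_eq ▸ iterate_fixed hA n
    rw [← hpre, mem_preimage, hz_zero]
    exact hz₀A
  have hz_ne : ∀ n, connectedComponentIn A (z n) ≠ connectedComponentIn A p := fun n h => by
    have hmem := mapsTo_iterate_connectedComponentIn_of_fixed hF hmaps hp hpA n
      (h ▸ mem_connectedComponentIn (hzA n))
    rw [hz_zero] at hmem
    exact hz₀ (connectedComponentIn_eq hmem).symm
  have hinj : Injective fun n => connectedComponentIn A (z n) := by
    refine Injective.of_lt_imp_ne fun j k hjk h => hz_ne k ?_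
    refine connectedComponentIn_eq_of_iterate_mem hF hmaps hp hpA hattract (hzA k)
      (Nat.sub_pos_of_lt hjk) ?_
    have hback : F^[k - j] (z k) = z j := by simpa [Nat.add_sub_cancel' hjk.le] using hz j (k - j)
    rw [hback, ← h]
    exact mem_connectedComponentIn (hzA j)
  exact infinite_of_injective_forall_mem hinj fun n => ⟨z n, hzA n, rfl⟩

end Components

def basin {X : Type*} [TopologicalSpace X] (F : X → X) (p : X) : Set X :=
  {z | Tendsto (fun n => F^[n] z) atTop (𝓝 p)}

theorem preimage_basin {X : Type*} [TopologicalSpace X] (F : X → X) (p : X) :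
    F ⁻¹' basin F p = basin F p := by
  ext z
  simp only [basin, mem_preimage, mem_ofPred_eq, ← iterate_succ_apply]
  exact tendsto_add_atTop_iff_nat (f := fun n => F^[n] z) 1

theorem basin_mem_nhds_of_eventually_dist_le {X : Type*} [PseudoMetricSpace X] {F : X → X}
    {p : X} {c : ℝ≥0} (hc : c < 1) (h : ∀ᶠ x in 𝓝 p, dist (F x) p ≤ c * dist x p) :
    basin F p ∈ 𝓝 p := by
  obtain ⟨δ, hδ, hball⟩ := Metric.eventually_nhds_iff_ball.mp h
  have hiter : ∀ x ∈ Metric.ball p δ, ∀ n, dist (F^[n] x) p ≤ c ^ n * dist x p := by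
    intro x hx n
    induction n with
    | zero => simp
    | succ n ih =>
      have hn : F^[n] x ∈ Metric.ball p δ :=
        (ih.trans (mul_le_of_le_one_left dist_nonneg (pow_le_one₀ c.2 hc.le))).trans_lt hx
      calc dist (F^[n + 1] x) p = dist (F (F^[n] x)) p := by rw [iterate_succ_apply']
        _ ≤ c * dist (F^[n] x) p := hball _ hn
        _ ≤ c * (c ^ n * dist x p) := by gcongr
        _ = c ^ (n + 1) * dist x p := by ring
  refine mem_of_superset (Metric.ball_mem_nhds p hδ) fun x hx => ?_
  have hlim : Tendsto (fun n => (c : ℝ) ^ n * dist x p) atTop (𝓝 0) := by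
    simpa using (tendsto_pow_atTop_nhds_zero_of_lt_one c.2 hc).mul_const (dist x p)
  exact tendsto_iff_dist_tendsto_zero.mpr (squeeze_zero (fun _ => dist_nonneg) (hiter x hx) hlim)

theorem HasFDerivAt.basin_mem_nhds {𝕜 E : Type*} [NontriviallyNormedField 𝕜] [NormedAddCommGroup E]
    [NormedSpace 𝕜 E] {F : E → E} {F' : E →L[𝕜] E} {p : E} (hF : HasFDerivAt F F' p)
    (hp : F p = p) (h : ‖F'‖ < 1) : basin F p ∈ 𝓝 p := by
  obtain ⟨c, hF'c, hc⟩ := exists_between (show ‖F'‖₊ < 1 from h)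
  have hε : 0 < (c : ℝ) - ‖F'‖ := sub_pos.mpr hF'c
  refine basin_mem_nhds_of_eventually_dist_le hc ?_
  filter_upwards [hF.isLittleO.def hε] with x hx
  rw [hp] at hx
  rw [dist_eq_norm, dist_eq_norm]
  calc ‖F x - p‖ ≤ ‖F x - p - F' (x - p)‖ + ‖F' (x - p)‖ := norm_le_norm_sub_add _ _
    _ ≤ ((c : ℝ) - ‖F'‖) * ‖x - p‖ + ‖F'‖ * ‖x - p‖ := add_le_add hx (F'.le_opNorm _)
    _ = c * ‖x - p‖ := by ring

/-- if the basin of attraction of an attracting fixed point of a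
polynomial of degree ≥ 2 is not connected, then it has infinitely many
connected components. -/
theorem basin_infinitely_many_components
    (f : Polynomial ℂ) (N : ℕ) (hN : 2 ≤ N) (hdeg : f.natDegree = N)
    (p : ℂ) (hfix : f.eval p = p)
    (hattr : ‖(Polynomial.derivative f).eval p‖ < 1)
    (A : Set ℂ)
    (hA : A = {z : ℂ | Tendsto (fun n => (fun w => f.eval w)^[n] z) atTop (nhds p)})
    (hdisconn : ¬ IsPreconnected A) :
    {C : Set ℂ | ∃ z ∈ A, C = connectedComponentIn A z}.Infinite := by
  set F : ℂ → ℂ := fun w => f.eval w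
  change A = basin F p at hA
  subst hA
  have hnhds : basin F p ∈ 𝓝 p :=
    (f.hasDerivAt p).hasFDerivAt.basin_mem_nhds hfix (by simpa using hattr)
  refine infinite_connectedComponentIn_of_surjective f.continuous
    (IsAlgClosed.eval_surjective (by omega)) (preimage_basin F p) hfix (mem_of_mem_nhds hnhds)
    (fun z hz => ?_) hdisconn
  exact (hz.eventually_mem (connectedComponentIn_mem_nhds hnhds)).exists
end
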